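/- arXiv:2005.10022 — 4 statements merged into one kernel-verified Lean document; each statement's English description precedes it below -/
import Mathlib

section
/- Let φ(t,s) = 4 − s² for 0 ≤ s ≤ t < √3. Then (φ − s·φ_s)·(φ + (t−s)·φ_s) + s(t−s)·φ·φ_ss > 0 for all 0 ≤ s ≤ t < √3, where φ_s = −2s and φ_ss = −2; i.e., (4+s²)(4+s²−2ts+2s²) − 2s(t−s)(4−s²) = 16 − s⁴ + 16s² − 16st > 0. -/
/-! Using `s ^ 4 ≤ 3 * s ^ 2` and `s * t ≤ √3 * s`, the polynomial `16 - s⁴ + 16s² - 16st` is bounded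
below by the quadratic `13s² - 16√3 s + 16`, whose discriminant `768 - 832` is negative. -/

open Real

lemma wrona_expr_eq (t s : ℝ) :
    (4 - s ^ 2 - s * (-2 * s)) * (4 - s ^ 2 + (t - s) * (-2 * s)) + s * (t - s) * (4 - s ^ 2) * -2
      = 16 - s ^ 4 + 16 * s ^ 2 - 16 * s * t := by
  ring

lemma quadratic_sqrt_three_pos (x : ℝ) : 0 < 13 * x ^ 2 - 16 * √3 * x + 16 := by
  -- `13 * (13x² - 16√3 x + 16) = (13x - 8√3)² + 16`
  nlinarith [sq_nonneg (13 * x - 8 * √3), sq_sqrt (show (0 : ℝ) ≤ 3 by norm_num)]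

lemma wrona_poly_pos {s t : ℝ} (hs : 0 ≤ s) (hs3 : s ≤ √3) (ht : t ≤ √3) :
    0 < 16 - s ^ 4 + 16 * s ^ 2 - 16 * s * t := by
  have hs2 : s ^ 2 ≤ 3 := (le_sqrt hs (by norm_num)).mp hs3
  have hs4 : s ^ 4 ≤ 3 * s ^ 2 := by nlinarith [sq_nonneg s]
  have hst : s * t ≤ s * √3 := mul_le_mul_of_nonneg_left ht hs
  calc 0 < 13 * s ^ 2 - 16 * √3 * s + 16 := quadratic_sqrt_three_pos s
    _ ≤ 16 - s ^ 4 + 16 * s ^ 2 - 16 * s * t := by linarith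

theorem wrona_pseudoconvex (t s : ℝ) (h0 : 0 ≤ s) (hst : s ≤ t)
    (ht : t < Real.sqrt 3) :
    let φ := 4 - s ^ 2
    let φs := -2 * s
    let φss : ℝ := -2
    (φ - s * φs) * (φ + (t - s) * φs) + s * (t - s) * φ * φss
        = 16 - s ^ 4 + 16 * s ^ 2 - 16 * s * t
      ∧ (φ - s * φs) * (φ + (t - s) * φs) + s * (t - s) * φ * φss > 0 := by
  intro φ φs φss
  refine ⟨wrona_expr_eq t s, ?_⟩
  rw [gt_iff_lt, wrona_expr_eq t s]
  exact wrona_poly_pos h0 (hst.trans ht.le) ht.le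
end

section
/- Let φ(t,s) = 4 − s², c₀ = φ − s·φ_s = 4 + s², and k̃ = c₀(c₀ + t·φ_s) + 2s(t−s)·φ·φ_ss = (4+s²)(4+s²−2ts) − 4s(t−s)(4−s²). Then there exist t ∈ [0, √3) and s ∈ [0, t] with k̃ < 0; in fact, with s = t/2 one has k̃ = 16 + t⁴/16 − 6t², which is negative for t² sufficiently close to 3. -/
/-! At `s = t / 2`, `k̃` is the quadratic `u² / 16 - 6u + 16` in `u = t²`, whose smaller root
`48 - 32√2 ≈ 2.75` lies below `3`; the witness `t = 1.7` has `u = 2.89`. -/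

theorem ktilde_at_half (t : ℝ) :
    (4 + (t / 2) ^ 2) * (4 + (t / 2) ^ 2 - 2 * t * (t / 2)) - 4 * (t / 2) * (t - t / 2) * (4 - (t / 2) ^ 2)
      = 16 + t ^ 4 / 16 - 6 * t ^ 2 := by
  ring

theorem quartic_neg_of_sq_mem_Icc {t : ℝ} (ht : t ^ 2 ∈ Set.Icc 2.8 3) :
    16 + t ^ 4 / 16 - 6 * t ^ 2 < 0 := by
  nlinarith [mul_nonneg (sub_nonneg.2 ht.1) (sub_nonneg.2 ht.2)]

theorem ktilde_negative_somewhere :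
    ∃ t s : ℝ, 0 ≤ t ∧ t < Real.sqrt 3 ∧ 0 ≤ s ∧ s ≤ t ∧
      s = t / 2 ∧
      (4 + s ^ 2) * (4 + s ^ 2 - 2 * t * s) - 4 * s * (t - s) * (4 - s ^ 2)
        = 16 + t ^ 4 / 16 - 6 * t ^ 2 ∧
      (4 + s ^ 2) * (4 + s ^ 2 - 2 * t * s) - 4 * s * (t - s) * (4 - s ^ 2) < 0 := by
  refine ⟨1.7, 1.7 / 2, by norm_num, (Real.lt_sqrt (by norm_num)).2 (by norm_num), by norm_num,
    by norm_num, rfl, ktilde_at_half _, ?_⟩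
  rw [ktilde_at_half]
  exact quartic_neg_of_sq_mem_Icc ⟨by norm_num, by norm_num⟩
end

section
/- Let H = c₀·I_{2n} + B·X·Bᵀ where B is the 2n×3 matrix with columns s_·, x, Jx and X = diag(r·φ_ss/2, φ_s, φ_s), under the relations Σ(s_i)² = (4/r)s(t−s), Σ s_i x^i = (2/r)(t−s)⟨u|x⟩, Σ s_i (Jx)^i = (2/r)(t−s)⟨u|Jx⟩, ‖x‖² = ‖Jx‖² = t, ⟨x|Jx⟩ = 0, and ⟨u|x⟩² + ⟨u|Jx⟩² = rs. Then the characteristic polynomial of H is det(λI_{2n} − H) = (λ−c₀)^{2n−3}·(λ−c₀−t·φ_s)·(λ² − (2c₀ + t·φ_s + 2s(t−s)·φ_ss)·λ + k̃), where k̃ = c₀(c₀ + t·φ_s) + 2s(t−s)·φ·φ_ss and φ = c₀ + s·φ_s. -/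
/-!
Writing `μ = λ - c₀`, we have `λ • 1 - H = μ • 1 - (B X) Bᵀ`, and Sylvester's determinant identity
(`charpoly_mul_comm_of_le`) moves the rank-three factor to the other side:
`det (μ • 1 - (B X) Bᵀ) = μ ^ (2n - 3) * det (μ • 1 - (Bᵀ B) X)`. The inner-product relations
determine the Gram matrix `Bᵀ B`; since `x ⟂ Jx` and `‖x‖² = ‖Jx‖² = t`, the vector `(0, q, -p)`
is an eigenvector of `(Bᵀ B) X` for `t φs`, which splits off the factor `λ - c₀ - t φs`, and
`p² + q² = r s` turns the remaining quadratic into the stated one.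
-/

namespace Matrix

variable {R : Type*} [CommRing R]

theorem det_smul_one_sub_mul_comm_of_le {m k : Type*} [Fintype m] [DecidableEq m] [Fintype k]
    [DecidableEq k] (A : Matrix m k R) (B : Matrix k m R)
    (hle : Fintype.card k ≤ Fintype.card m) (μ : R) :
    (μ • 1 - A * B).det = μ ^ (Fintype.card m - Fintype.card k) * (μ • 1 - B * A).det := by
  simpa [eval_charpoly, smul_one_eq_diagonal] using
    congrArg (Polynomial.eval μ) (charpoly_mul_comm_of_le A B hle)

theorem transpose_mul_self_of_three_columns {m : Type*} [Fintype m] (u v w : m → R) :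
    (of fun i j => ![u i, v i, w i] j)ᵀ * of (fun i j => ![u i, v i, w i] j) =
      !![u ⬝ᵥ u, u ⬝ᵥ v, u ⬝ᵥ w; v ⬝ᵥ u, v ⬝ᵥ v, v ⬝ᵥ w; w ⬝ᵥ u, w ⬝ᵥ v, w ⬝ᵥ w] := by
  ext j l
  fin_cases j <;> fin_cases l <;> rfl

theorem det_smul_one_sub_mul_diagonal_fin_three (μ α β γ t a b : R) :
    (μ • 1 - !![α, β, γ; β, t, 0; γ, 0, t] * diagonal ![a, b, b]).det =
      (μ - t * b) * (μ ^ 2 - (α * a + t * b) * μ + (α * t - β ^ 2 - γ ^ 2) * a * b) := by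
  have hmat : μ • 1 - !![α, β, γ; β, t, 0; γ, 0, t] * diagonal ![a, b, b] =
      !![μ - α * a, -(β * b), -(γ * b); -(β * a), μ - t * b, 0; -(γ * a), 0, μ - t * b] := by
    ext i j
    fin_cases i <;> fin_cases j <;> simp [vecMul_diagonal]
  rw [hmat, det_fin_three]
  simp only [of_apply, cons_val_zero, cons_val_one, cons_val_two, head_cons, tail_cons]
  ring

end Matrix

open Matrix in
theorem charpoly_of_real_fundamental_tensor_general (n : ℕ) (hn : 2 ≤ n)
    (c₀ t s r φs φss p q : ℝ) (hr : 0 < r)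
    (si x Jx : Fin (2 * n) → ℝ)
    (h1 : (∑ i, si i ^ 2) = (4 / r) * s * (t - s))
    (h2 : (∑ i, si i * x i) = (2 / r) * (t - s) * p)
    (h3 : (∑ i, si i * Jx i) = (2 / r) * (t - s) * q)
    (h4 : (∑ i, x i * x i) = t)
    (h5 : (∑ i, Jx i * Jx i) = t)
    (h6 : (∑ i, x i * Jx i) = 0)
    (h7 : p ^ 2 + q ^ 2 = r * s) :
    let φ := c₀ + s * φs
    let B : Matrix (Fin (2 * n)) (Fin 3) ℝ :=
      Matrix.of fun i j => ![si i, x i, Jx i] j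
    let X : Matrix (Fin 3) (Fin 3) ℝ :=
      Matrix.diagonal ![r * φss / 2, φs, φs]
    let H := c₀ • (1 : Matrix (Fin (2 * n)) (Fin (2 * n)) ℝ) + B * X * Bᵀ
    let ktilde := c₀ * (c₀ + t * φs) + 2 * s * (t - s) * φ * φss
    ∀ lam : ℝ,
      (lam • (1 : Matrix (Fin (2 * n)) (Fin (2 * n)) ℝ) - H).det
        = (lam - c₀) ^ (2 * n - 3) * (lam - c₀ - t * φs)
          * (lam ^ 2 - (2 * c₀ + t * φs + 2 * s * (t - s) * φss) * lam + ktilde) := by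
  intro φ B X H ktilde lam
  have hshift : lam • 1 - H = (lam - c₀) • 1 - (B * X) * Bᵀ := by
    simp only [H, sub_smul]
    abel
  have hgram : Bᵀ * B = !![(4 / r) * s * (t - s), (2 / r) * (t - s) * p, (2 / r) * (t - s) * q;
      (2 / r) * (t - s) * p, t, 0; (2 / r) * (t - s) * q, 0, t] := by
    simp only [B, transpose_mul_self_of_three_columns, dotProduct_comm x si, dotProduct_comm Jx si,
      dotProduct_comm Jx x]
    simp only [dotProduct, h2, h3, h4, h5, h6]
    simp only [← sq, h1]
  have hcard : Fintype.card (Fin 3) ≤ Fintype.card (Fin (2 * n)) := by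
    simp only [Fintype.card_fin]
    omega
  rw [hshift, det_smul_one_sub_mul_comm_of_le _ _ hcard, ← Matrix.mul_assoc, hgram,
    det_smul_one_sub_mul_diagonal_fin_three]
  have hr0 : r ≠ 0 := hr.ne'
  have htrace : 4 / r * s * (t - s) * (r * φss / 2) = 2 * s * (t - s) * φss := by
    field_simp
    ring
  have hdet : (4 / r * s * (t - s) * t - (2 / r * (t - s) * p) ^ 2 - (2 / r * (t - s) * q) ^ 2)
      * (r * φss / 2) * φs = 2 * s ^ 2 * (t - s) * φs * φss := by
    field_simp
    linear_combination (-4 * (t - s) ^ 2 * φs * φss) * h7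
  rw [htrace, hdet, Fintype.card_fin, Fintype.card_fin]
  ring

open Matrix in
theorem charpoly_of_real_fundamental_tensor (n : ℕ) (hn : 2 ≤ n)
    (c₀ t s r φs φss p q : ℝ) (hr : 0 < r) (hs0 : 0 ≤ s) (hst : s ≤ t)
    (si x Jx : Fin (2 * n) → ℝ)
    (h1 : (∑ i, si i ^ 2) = (4 / r) * s * (t - s))
    (h2 : (∑ i, si i * x i) = (2 / r) * (t - s) * p)
    (h3 : (∑ i, si i * Jx i) = (2 / r) * (t - s) * q)
    (h4 : (∑ i, x i * x i) = t)
    (h5 : (∑ i, Jx i * Jx i) = t)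
    (h6 : (∑ i, x i * Jx i) = 0)
    (h7 : p ^ 2 + q ^ 2 = r * s) :
    let φ := c₀ + s * φs
    let B : Matrix (Fin (2 * n)) (Fin 3) ℝ :=
      Matrix.of fun i j => ![si i, x i, Jx i] j
    let X : Matrix (Fin 3) (Fin 3) ℝ :=
      Matrix.diagonal ![r * φss / 2, φs, φs]
    let H := c₀ • (1 : Matrix (Fin (2 * n)) (Fin (2 * n)) ℝ) + B * X * Bᵀ
    let ktilde := c₀ * (c₀ + t * φs) + 2 * s * (t - s) * φ * φss
    ∀ lam : ℝ,
      (lam • (1 : Matrix (Fin (2 * n)) (Fin (2 * n)) ℝ) - H).det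
        = (lam - c₀) ^ (2 * n - 3) * (lam - c₀ - t * φs)
          * (lam ^ 2 - (2 * c₀ + t * φs + 2 * s * (t - s) * φss) * lam + ktilde) :=
  charpoly_of_real_fundamental_tensor_general n hn c₀ t s r φs φss p q hr si x Jx h1 h2 h3 h4 h5 h6
    h7
end

section
/- Let φ : [0,∞)×[0,∞) → (0,∞) be continuous at (1,0) with φ(1,0) = 1. Let z, w ∈ ℂⁿ with ‖z‖ = ‖w‖ = 1 and ⟨z,w⟩ = 0, let 0 < α < π/2, and set γ(τ) = z·cos τ + w·sin τ. For each m ≥ 1 set τ_i = α·i/m (0 ≤ i ≤ m). Then lim_{m→∞} Σ_{i=0}^{m−1} F(γ(τ_i), γ(τ_{i+1}) − γ(τ_i)) = α, where F(z,v) = √( ‖v‖² · φ(‖z‖², |⟨z,v⟩|²/‖v‖²) ). -/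
/-!
For orthonormal `z, w` the curve `γ τ = cos τ • z + sin τ • w` satisfies `⟪γ a, γ b⟫ = cos (b - a)`.
Hence every chord `v = γ (a + 2t) - γ a` has `‖v‖² = 4 sin² t` and `|⟪γ a, v⟫|² / ‖v‖² = sin² t`,
so each of the `m` summands equals `2 |sin t| √(φ 1 (sin² t))` with `t = α / (2m)`. The sum is
therefore `2 |m sin (α / 2 / m)| √(φ 1 (sin² (α / 2 / m)))`, which tends to `α` because
`m sin (x / m) → x` and `φ` is continuous at `(1, 0)` with value `1`.
-/

open Filter Topology Real

theorem Real.tendsto_nat_mul_sin_div (x : ℝ) :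
    Tendsto (fun m : ℕ => m * sin (x / m)) atTop (𝓝 x) := by
  have hsinc : Tendsto (fun m : ℕ => sinc (x / m)) atTop (𝓝 1) := by
    simpa [sinc_zero, Function.comp_def] using
      (continuous_sinc.tendsto 0).comp (tendsto_const_div_atTop_nhds_zero_nat x)
  have hmul := hsinc.const_mul x
  rw [mul_one] at hmul
  refine hmul.congr' ?_
  filter_upwards [eventually_ne_atTop 0] with m hm
  have hm' : (m : ℝ) ≠ 0 := Nat.cast_ne_zero.2 hm
  rcases eq_or_ne x 0 with rfl | hx
  · simp
  · rw [sinc_of_ne_zero (div_ne_zero hx hm')]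
    field_simp

theorem Real.cos_eq_one_sub_two_mul_sin_sq_half (x : ℝ) : cos x = 1 - 2 * sin (x / 2) ^ 2 := by
  have hx : x = 2 * (x / 2) := by ring
  conv_lhs => rw [hx, cos_two_mul]
  linarith [sin_sq_add_cos_sq (x / 2)]

section GreatCircle

variable {E : Type*} [NormedAddCommGroup E] [InnerProductSpace ℂ E]

noncomputable def greatCircle (z w : E) (τ : ℝ) : E :=
  (cos τ : ℂ) • z + (sin τ : ℂ) • w

noncomputable def finslerNorm (φ : ℝ → ℝ → ℝ) (p v : E) : ℝ :=
  √(‖v‖ ^ 2 * φ (‖p‖ ^ 2) (‖(inner ℂ p v : ℂ)‖ ^ 2 / ‖v‖ ^ 2))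

variable {z w : E} (hz : ‖z‖ = 1) (hw : ‖w‖ = 1) (hzw : (inner ℂ z w : ℂ) = 0)
include hz hw hzw

theorem inner_greatCircle (a b : ℝ) :
    (inner ℂ (greatCircle z w a) (greatCircle z w b) : ℂ) = cos (b - a) := by
  have hzz : (inner ℂ z z : ℂ) = 1 := by simp [inner_self_eq_norm_sq_to_K, hz]
  have hww : (inner ℂ w w : ℂ) = 1 := by simp [inner_self_eq_norm_sq_to_K, hw]
  have hwz : (inner ℂ w z : ℂ) = 0 := by rw [← inner_conj_symm, hzw, map_zero]
  simp only [greatCircle, inner_add_left, inner_add_right, inner_smul_left, inner_smul_right,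
    hzz, hww, hzw, hwz, Complex.conj_ofReal, cos_sub]
  push_cast
  ring

theorem norm_greatCircle (a : ℝ) : ‖greatCircle z w a‖ = 1 := by
  rw [norm_eq_sqrt_re_inner (𝕜 := ℂ), inner_greatCircle hz hw hzw]
  simp

theorem inner_greatCircle_sub (a b : ℝ) :
    (inner ℂ (greatCircle z w a) (greatCircle z w b - greatCircle z w a) : ℂ) =
      ((-(2 * sin ((b - a) / 2) ^ 2) : ℝ) : ℂ) := by
  rw [inner_sub_right, inner_greatCircle hz hw hzw, inner_greatCircle hz hw hzw, sub_self,
    cos_zero, cos_eq_one_sub_two_mul_sin_sq_half]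
  push_cast
  ring

theorem norm_greatCircle_sub_sq (a b : ℝ) :
    ‖greatCircle z w b - greatCircle z w a‖ ^ 2 = 4 * sin ((b - a) / 2) ^ 2 := by
  rw [@norm_sub_sq ℂ, norm_greatCircle hz hw hzw, norm_greatCircle hz hw hzw,
    inner_greatCircle hz hw hzw, RCLike.re_to_complex, Complex.ofReal_re,
    show a - b = -(b - a) by ring, cos_neg, cos_eq_one_sub_two_mul_sin_sq_half]
  ring

theorem finslerNorm_greatCircle_chord (φ : ℝ → ℝ → ℝ) (a b : ℝ) :
    finslerNorm φ (greatCircle z w a) (greatCircle z w b - greatCircle z w a) =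
      2 * |sin ((b - a) / 2)| * √(φ 1 (sin ((b - a) / 2) ^ 2)) := by
  set s := sin ((b - a) / 2)
  -- also for a degenerate chord (`s = 0`), thanks to `0 / 0 = 0`
  have hratio : (2 * s ^ 2) ^ 2 / (4 * s ^ 2) = s ^ 2 := by
    rcases eq_or_ne s 0 with hs | hs
    · simp [hs]
    · field_simp
      ring
  rw [finslerNorm, norm_greatCircle_sub_sq hz hw hzw, norm_greatCircle hz hw hzw,
    inner_greatCircle_sub hz hw hzw, Complex.norm_real, norm_neg, Real.norm_eq_abs, sq_abs,
    hratio, one_pow, show 4 * s ^ 2 = (2 * s) ^ 2 by ring, sqrt_mul (sq_nonneg _),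
    sqrt_sq_eq_abs, abs_mul, abs_two]

end GreatCircle

theorem geodesic_length_limit_general (n : ℕ) (φ : ℝ → ℝ → ℝ)
    (hcont : ContinuousAt (Function.uncurry φ) (1, 0))
    (hnorm : φ 1 0 = 1)
    (z w : EuclideanSpace ℂ (Fin n))
    (hz : ‖z‖ = 1) (hw : ‖w‖ = 1) (hzw : (inner ℂ z w : ℂ) = 0)
    (α : ℝ) (hα0 : 0 < α) :
    let γ : ℝ → EuclideanSpace ℂ (Fin n) :=
      fun τ => (Real.cos τ : ℂ) • z + (Real.sin τ : ℂ) • w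
    let F : EuclideanSpace ℂ (Fin n) → EuclideanSpace ℂ (Fin n) → ℝ :=
      fun p v => Real.sqrt (‖v‖ ^ 2 * φ (‖p‖ ^ 2) (‖(inner ℂ p v : ℂ)‖ ^ 2 / ‖v‖ ^ 2))
    Filter.Tendsto
      (fun m : ℕ => ∑ i ∈ Finset.range m,
        F (γ (α * i / m)) (γ (α * (i + 1) / m) - γ (α * i / m)))
      Filter.atTop (nhds α) := by
  intro γ F
  have hsummand (m i : ℕ) : F (γ (α * i / m)) (γ (α * (i + 1) / m) - γ (α * i / m)) =
      2 * |sin (α / 2 / m)| * √(φ 1 (sin (α / 2 / m) ^ 2)) := by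
    have h := finslerNorm_greatCircle_chord hz hw hzw φ (α * i / m) (α * (i + 1) / m)
    rwa [show (α * (i + 1) / m - α * i / m) / 2 = α / 2 / m by ring] at h
  simp only [hsummand, Finset.sum_const, Finset.card_range, nsmul_eq_mul]
  have hchord : Tendsto (fun m : ℕ => 2 * |m * sin (α / 2 / m)|) atTop (𝓝 α) := by
    have h := (tendsto_nat_mul_sin_div (α / 2)).abs.const_mul 2
    rwa [abs_of_pos (half_pos hα0), mul_div_cancel₀ α two_ne_zero] at h
  have hprofile : Tendsto (fun m : ℕ => √(φ 1 (sin (α / 2 / m) ^ 2))) atTop (𝓝 1) := by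
    have hsin : Tendsto (fun m : ℕ => sin (α / 2 / m) ^ 2) atTop (𝓝 0) := by
      simpa [Function.comp_def] using ((continuous_sin.tendsto 0).comp
        (tendsto_const_div_atTop_nhds_zero_nat (α / 2))).pow 2
    have hφ := hcont.tendsto.comp (tendsto_const_nhds.prodMk_nhds hsin)
    rw [Function.uncurry_apply_pair, hnorm] at hφ
    simpa [Function.comp_def] using (continuous_sqrt.tendsto 1).comp hφ
  convert hchord.mul hprofile using 2 with m
  · rw [abs_mul, Nat.abs_cast]
    ring
  · rw [mul_one]

theorem geodesic_length_limit (n : ℕ) (φ : ℝ → ℝ → ℝ)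
    (hpos : ∀ t s, 0 ≤ t → 0 ≤ s → 0 < φ t s)
    (hcont : ContinuousAt (Function.uncurry φ) (1, 0))
    (hnorm : φ 1 0 = 1)
    (z w : EuclideanSpace ℂ (Fin n))
    (hz : ‖z‖ = 1) (hw : ‖w‖ = 1) (hzw : (inner ℂ z w : ℂ) = 0)
    (α : ℝ) (hα0 : 0 < α) (hα1 : α < Real.pi / 2) :
    let γ : ℝ → EuclideanSpace ℂ (Fin n) :=
      fun τ => (Real.cos τ : ℂ) • z + (Real.sin τ : ℂ) • w
    let F : EuclideanSpace ℂ (Fin n) → EuclideanSpace ℂ (Fin n) → ℝ :=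
      fun p v => Real.sqrt (‖v‖ ^ 2 * φ (‖p‖ ^ 2) (‖(inner ℂ p v : ℂ)‖ ^ 2 / ‖v‖ ^ 2))
    Filter.Tendsto
      (fun m : ℕ => ∑ i ∈ Finset.range m,
        F (γ (α * i / m)) (γ (α * (i + 1) / m) - γ (α * i / m)))
      Filter.atTop (nhds α) :=
  geodesic_length_limit_general n φ hcont hnorm z w hz hw hzw α hα0
end
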